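/- arXiv:math/0011193 — 7 statements merged into one kernel-verified Lean document; each statement's English description precedes it below -/
import Mathlib

section
/- Let A be a unital associative *-algebra over ℂ (star is conjugate-linear on scalars), let λ ∈ ℂ satisfy λ * conj(λ) = 1, and let t, α, β ∈ A be arbitrary. Define the 4×4 matrix e over A with rows: row 1 = (t, 0, α, β); row 2 = (0, t, −λ • (star β), star α); row 3 = (star α, −conj(λ) • β, 1 − t, 0); row 4 = (star β, α, 0, 1 − t). Let Q = A / (ℂ • 1) be the quotient of A by the ℂ-linear span of the unit, with quotient map π : A → Q (a map of ℂ-vector spaces). Then the degree-one component of the Chern character of e vanishes identically: the element ∑_{i,j,k=1}^{4} (e_{ij} − (1/2)δ_{ij} • 1) ⊗ π(e_{jk}) ⊗ π(e_{ki}) is equal to 0 in A ⊗_ℂ Q ⊗_ℂ Q. -/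
open TensorProduct

/-- Vanishing of the degree-one component `⟨Ch₁(e)⟩` of the Chern character of the basic
instanton idempotent `e` over a complex *-algebra, in `A ⊗ (A/ℂ1) ⊗ (A/ℂ1)`. -/
theorem stmt_3 {A : Type*} [Ring A] [Algebra ℂ A] [StarRing A] [StarModule ℂ A]
    (l : ℂ) (hl : l * (starRingEnd ℂ) l = 1) (t α β : A)
    (e : Matrix (Fin 4) (Fin 4) A)
    (he : e = !![t, 0, α, β;
                 0, t, -(l • star β), star α;
                 star α, -((starRingEnd ℂ) l • β), 1 - t, 0;
                 star β, α, 0, 1 - t]) :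
    ∑ i : Fin 4, ∑ j : Fin 4, ∑ k : Fin 4,
      (e i j - (if i = j then ((1 : ℂ) / 2) • (1 : A) else 0)) ⊗ₜ[ℂ]
        (((Submodule.span ℂ {(1 : A)}).mkQ (e j k)) ⊗ₜ[ℂ]
          ((Submodule.span ℂ {(1 : A)}).mkQ (e k i)))
      = (0 : A ⊗[ℂ] ((A ⧸ Submodule.span ℂ {(1 : A)}) ⊗[ℂ] (A ⧸ Submodule.span ℂ {(1 : A)}))) := by
  subst he
  have h1 : (Submodule.span ℂ {(1 : A)}).mkQ 1 = 0 := by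
    rw [Submodule.mkQ_apply, Submodule.Quotient.mk_eq_zero]
    exact Submodule.mem_span_singleton_self 1
  simp only [Fin.sum_univ_four]
  simp only [Matrix.cons_val', Matrix.cons_val_zero, Matrix.cons_val_one, Matrix.head_cons,
    Matrix.cons_val_two, Matrix.cons_val_three, Matrix.tail_cons, Matrix.empty_val',
    Matrix.cons_val_fin_one, Matrix.head_fin_const, Matrix.of_apply]
  simp only [reduceIte, Fin.reduceEq, map_sub, map_neg, map_smul, map_zero, h1, zero_sub,
    sub_zero]
  simp only [tmul_zero, zero_tmul, tmul_neg, neg_tmul, neg_neg, smul_tmul, tmul_smul,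
    sub_tmul, tmul_sub, add_tmul, tmul_add, smul_sub, smul_add, smul_neg, neg_smul,
    smul_smul, smul_zero, add_zero, zero_add, neg_zero]
  match_scalars <;>
    (first
      | linear_combination -hl
      | linear_combination hl
      | linear_combination hl/2
      | linear_combination -hl/2
      | ring)
end

section
/- Fix θ ∈ ℝ with θ ≠ 0, and let U, V be the operators on the Schwartz space 𝓢(ℝ; ℂ) given by (Uξ)(s) = ξ(s + θ) and (Vξ)(s) = exp(2πis) · ξ(s). The maps ∇₁ and ∇₂ defined by (∇₁ξ)(s) = −(2πis/θ) · ξ(s) and (∇₂ξ)(s) = ξ′(s) send Schwartz functions to Schwartz functions, and as operators on 𝓢(ℝ; ℂ) they satisfy the connection compatibility relations: ∇₁ ∘ U − U ∘ ∇₁ = 2πi · U, ∇₁ ∘ V − V ∘ ∇₁ = 0, ∇₂ ∘ U − U ∘ ∇₂ = 0, and ∇₂ ∘ V − V ∘ ∇₂ = 2πi · V. -/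
/-!
Translation by `θ` and multiplication by the temperate functions `e^{2πis}` (all of whose
derivatives are bounded) and `-2πis/θ` (which is linear) are continuous operators on `𝓢(ℝ, ℂ)`,
as is differentiation. The relations are then pointwise identities: multiplication operators
commute, differentiation commutes with translation, `[∇₁, U]` is multiplication by the constant
increment `-2πi (s - (s + θ)) / θ = 2πi` of the multiplier, and `[∇₂, V]` is the Leibniz rule
with `(e^{2πis})' = 2πi e^{2πis}`.
-/

open Complex SchwartzMap

theorem hasDerivAt_cexp_mul_ofReal (c : ℂ) (x : ℝ) :
    HasDerivAt (fun s : ℝ => cexp (c * s)) (c * cexp (c * x)) x := by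
  simpa [mul_comm c] using ((hasDerivAt_id (x : ℂ)).const_mul c).cexp.comp_ofReal

theorem iteratedDeriv_cexp_mul_ofReal (n : ℕ) (c : ℂ) :
    iteratedDeriv n (fun s : ℝ => cexp (c * s)) = fun s : ℝ => c ^ n * cexp (c * s) := by
  induction n with
  | zero => simp
  | succ n ih =>
    ext x
    rw [iteratedDeriv_succ, ih, ((hasDerivAt_cexp_mul_ofReal c x).const_mul _).deriv, pow_succ,
      mul_assoc]

theorem hasTemperateGrowth_cexp_mul_ofReal {c : ℂ} (hc : c.re = 0) :
    (fun s : ℝ => cexp (c * s)).HasTemperateGrowth := by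
  refine ⟨(contDiff_const.mul ofRealCLM.contDiff).cexp, fun n => ⟨0, ‖c‖ ^ n, fun x => ?_⟩⟩
  have h : ‖cexp (c * x)‖ = 1 := by simp [Complex.norm_exp, hc]
  rw [norm_iteratedFDeriv_eq_norm_iteratedDeriv, iteratedDeriv_cexp_mul_ofReal]
  simp [h]

namespace SchwartzMap

variable {𝕜 E F : Type*} [RCLike 𝕜] [NormedAddCommGroup E] [NormedSpace ℝ E]
  [NormedAddCommGroup F] [NormedSpace ℝ F] [NormedSpace 𝕜 F]

theorem smulLeftCLM_comm {g₁ g₂ : E → 𝕜} (hg₁ : g₁.HasTemperateGrowth)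
    (hg₂ : g₂.HasTemperateGrowth) (f : 𝓢(E, F)) :
    smulLeftCLM F g₁ (smulLeftCLM F g₂ f) = smulLeftCLM F g₂ (smulLeftCLM F g₁ f) := by
  rw [smulLeftCLM_smulLeftCLM_apply hg₁ hg₂, smulLeftCLM_smulLeftCLM_apply hg₂ hg₁, mul_comm]

theorem smulLeftCLM_compSubConstCLM_sub {g : E → 𝕜} (hg : g.HasTemperateGrowth) {a : E} {c : 𝕜}
    (hgc : ∀ x, g x - g (x - a) = c) (f : 𝓢(E, F)) :
    smulLeftCLM F g (compSubConstCLM 𝕜 a f) - compSubConstCLM 𝕜 a (smulLeftCLM F g f) =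
      c • compSubConstCLM 𝕜 a f := by
  ext x
  simp [hg, ← hgc x, sub_smul]

theorem derivCLM_compSubConstCLM (a : ℝ) (f : 𝓢(ℝ, F)) :
    derivCLM 𝕜 F (compSubConstCLM 𝕜 a f) = compSubConstCLM 𝕜 a (derivCLM 𝕜 F f) := by
  ext x
  have hf : ⇑(compSubConstCLM 𝕜 a f) = fun y => f (y - a) := rfl
  simp [hf, deriv_comp_sub_const]

theorem derivCLM_smulLeftCLM_sub [IsScalarTower ℝ 𝕜 F] {g : ℝ → 𝕜} (hg : g.HasTemperateGrowth)
    {c : 𝕜} (hgc : ∀ x, HasDerivAt g (c * g x) x) (f : 𝓢(ℝ, F)) :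
    derivCLM 𝕜 F (smulLeftCLM F g f) - smulLeftCLM F g (derivCLM 𝕜 F f) =
      c • smulLeftCLM F g f := by
  ext x
  have hgf : HasDerivAt (fun y => g y • f y) (g x • deriv f x + (c * g x) • f x) x :=
    (hgc x).smul (f.hasDerivAt x)
  simp [smulLeftCLM_apply hg, hgf.deriv, smul_smul]

end SchwartzMap

/-- The connection operators `∇₁` (multiplication by `-2πis/θ`) and `∇₂` (differentiation)
preserve the Schwartz space and satisfy the compatibility relations
`[∇₁, U] = 2πi U`, `[∇₁, V] = 0`, `[∇₂, U] = 0`, `[∇₂, V] = 2πi V`. -/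
theorem stmt_5 (θ : ℝ) (hθ : θ ≠ 0) :
    ∃ U V D₁ D₂ : SchwartzMap ℝ ℂ → SchwartzMap ℝ ℂ,
      (∀ ξ : SchwartzMap ℝ ℂ, ∀ s : ℝ, U ξ s = ξ (s + θ)) ∧
      (∀ ξ : SchwartzMap ℝ ℂ, ∀ s : ℝ,
        V ξ s = Complex.exp (2 * Real.pi * Complex.I * s) * ξ s) ∧
      (∀ ξ : SchwartzMap ℝ ℂ, ∀ s : ℝ,
        D₁ ξ s = -(2 * Real.pi * Complex.I * s / θ) * ξ s) ∧
      (∀ ξ : SchwartzMap ℝ ℂ, ∀ s : ℝ, D₂ ξ s = deriv (⇑ξ) s) ∧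
      (∀ ξ : SchwartzMap ℝ ℂ,
        D₁ (U ξ) - U (D₁ ξ) = (2 * Real.pi * Complex.I : ℂ) • U ξ) ∧
      (∀ ξ : SchwartzMap ℝ ℂ, D₁ (V ξ) - V (D₁ ξ) = 0) ∧
      (∀ ξ : SchwartzMap ℝ ℂ, D₂ (U ξ) - U (D₂ ξ) = 0) ∧
      (∀ ξ : SchwartzMap ℝ ℂ,
        D₂ (V ξ) - V (D₂ ξ) = (2 * Real.pi * Complex.I : ℂ) • V ξ) := by
  set e : ℝ → ℂ := fun s => cexp (2 * Real.pi * I * s)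
  set m : ℝ → ℂ := fun s => -(2 * Real.pi * I * s / θ)
  have he : e.HasTemperateGrowth := hasTemperateGrowth_cexp_mul_ofReal (by simp)
  have hm : m.HasTemperateGrowth := by simp only [m, div_eq_mul_inv]; fun_prop
  have hm_sub (s : ℝ) : m s - m (s - -θ) = 2 * Real.pi * I := by
    have : (θ : ℂ) ≠ 0 := ofReal_ne_zero.mpr hθ
    simp only [m]; push_cast; field_simp; ring
  refine ⟨compSubConstCLM ℂ (-θ), smulLeftCLM ℂ e, smulLeftCLM ℂ m, derivCLM ℂ ℂ,
    fun ξ s => by simp, fun ξ s => smulLeftCLM_apply_apply he ξ s,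
    fun ξ s => smulLeftCLM_apply_apply hm ξ s, fun ξ s => rfl,
    fun ξ => smulLeftCLM_compSubConstCLM_sub hm hm_sub ξ,
    fun ξ => sub_eq_zero.mpr (smulLeftCLM_comm hm he ξ),
    fun ξ => sub_eq_zero.mpr (derivCLM_compSubConstCLM (-θ) ξ),
    fun ξ => derivCLM_smulLeftCLM_sub he (hasDerivAt_cexp_mul_ofReal _) ξ⟩
end

section
/- Let A be a unital associative algebra over ℂ, let τ : A → ℂ be a ℂ-linear functional with the trace property τ(x*y) = τ(y*x) for all x, y ∈ A, and let F ∈ A. For n ≥ 1 define the (n+1)-linear functional φ on A by φ(a⁰, a¹, …, aⁿ) = τ(a⁰ · [F, a¹] · [F, a²] ⋯ [F, aⁿ]), where [F, a] = F*a − a*F. Then φ is a Hochschild cocycle: for all a⁰, …, a^{n+1} ∈ A, ∑_{j=0}^{n} (−1)^j · φ(a⁰, …, a^{j} * a^{j+1}, …, a^{n+1}) + (−1)^{n+1} · φ(a^{n+1} * a⁰, a¹, …, aⁿ) = 0. -/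
/-!
With `P(b) = b⁰ ⁅F, b¹⁆ ⋯ ⁅F, bⁿ⁆`, the alternating sum of the faces already telescopes in `A`
to `(-1)ⁿ P(a) aⁿ⁺¹`: by the Leibniz rule for `⁅F, ·⁆`, the `j`-th face splits into two terms
shared with its neighbours. Applying `τ` and moving `aⁿ⁺¹` to the front by the trace property
gives exactly the cyclic term, which cancels it.
-/
namespace HochschildCharacter

variable {A : Type*} [Ring A]

theorem lie_mul_eq (F x y : A) : ⁅F, x * y⁆ = ⁅F, x⁆ * y + x * ⁅F, y⁆ := by
  simp only [Ring.lie_def]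
  noncomm_ring

def charProd (F : A) (n : ℕ) (b : ℕ → A) : A :=
  b 0 * (List.ofFn fun i : Fin n => ⁅F, b (i + 1)⁆).prod

def mulFace (a : ℕ → A) (j : ℕ) : ℕ → A :=
  fun i => if i < j then a i else if i = j then a j * a (j + 1) else a (i + 1)

theorem charProd_zero (F : A) (b : ℕ → A) : charProd F 0 b = b 0 := by
  simp [charProd]

theorem charProd_succ (F : A) (n : ℕ) (b : ℕ → A) :
    charProd F (n + 1) b = charProd F n b * ⁅F, b (n + 1)⁆ := by
  rw [charProd, charProd, List.ofFn_succ', List.prod_concat, mul_assoc]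
  rfl

theorem charProd_congr (F : A) {n : ℕ} {b c : ℕ → A} (h : ∀ i ≤ n, b i = c i) :
    charProd F n b = charProd F n c := by
  induction n with
  | zero => simp [charProd_zero, h 0 le_rfl]
  | succ n ih =>
    rw [charProd_succ, charProd_succ, ih fun i hi => h i (by omega), h (n + 1) le_rfl]

theorem charProd_mul_head (F c : A) (n : ℕ) (b : ℕ → A) :
    charProd F n (fun i => if i = 0 then c * b 0 else b i) = c * charProd F n b := by
  simp [charProd, mul_assoc]

theorem mulFace_of_lt {a : ℕ → A} {i j : ℕ} (h : i < j) : mulFace a j i = a i := if_pos h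

theorem mulFace_self (a : ℕ → A) (j : ℕ) : mulFace a j j = a j * a (j + 1) := by
  simp [mulFace]

theorem mulFace_of_gt {a : ℕ → A} {i j : ℕ} (h : j < i) : mulFace a j i = a (i + 1) := by
  simp [mulFace, h.not_gt, h.ne']

theorem sum_neg_one_pow_smul_charProd_mulFace (F : A) (n : ℕ) (a : ℕ → A) :
    ∑ j ∈ Finset.range (n + 1), (-1 : ℤ) ^ j • charProd F n (mulFace a j) =
      (-1 : ℤ) ^ n • (charProd F n a * a (n + 1)) := by
  induction n with
  | zero => simp [charProd_zero, mulFace_self]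
  | succ n ih =>
    have h_lower : ∀ j ∈ Finset.range (n + 1),
        charProd F (n + 1) (mulFace a j) = charProd F n (mulFace a j) * ⁅F, a (n + 1 + 1)⁆ := by
      intro j hj
      rw [charProd_succ, mulFace_of_gt (by simpa using hj)]
    have h_top : charProd F (n + 1) (mulFace a (n + 1)) =
        charProd F n a * (⁅F, a (n + 1)⁆ * a (n + 1 + 1) + a (n + 1) * ⁅F, a (n + 1 + 1)⁆) := by
      rw [charProd_succ, mulFace_self, lie_mul_eq,
        charProd_congr F fun i hi => mulFace_of_lt (Nat.lt_succ_of_le hi)]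
    rw [Finset.sum_range_succ, Finset.sum_congr rfl fun j hj => by rw [h_lower j hj],
      h_top, charProd_succ]
    simp_rw [← smul_mul_assoc]
    rw [← Finset.sum_mul, ih, pow_succ]
    simp only [smul_mul_assoc, mul_add, mul_neg_one, neg_smul, neg_mul, mul_assoc]
    abel

theorem sum_neg_one_pow_mul_map_charProd_mulFace {R G : Type*} [Ring R] [FunLike G A R]
    [AddMonoidHomClass G A R] (τ : G) (F : A) (n : ℕ) (a : ℕ → A) :
    ∑ j ∈ Finset.range (n + 1), (-1 : R) ^ j * τ (charProd F n (mulFace a j)) =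
      (-1 : R) ^ n * τ (charProd F n a * a (n + 1)) := by
  have h := congrArg τ (sum_neg_one_pow_smul_charProd_mulFace F n a)
  simp only [map_sum, map_zsmul] at h
  simpa only [zsmul_eq_mul, Int.cast_pow, Int.cast_neg, Int.cast_one] using h

end HochschildCharacter

open HochschildCharacter in
theorem stmt_7_general {A : Type*} [Ring A] [Algebra ℂ A] (τ : A →ₗ[ℂ] ℂ)
    (hτ : ∀ x y : A, τ (x * y) = τ (y * x)) (F : A) (n : ℕ) :
    ∀ a : ℕ → A,
      let φ : (ℕ → A) → ℂ := fun b =>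
        τ (b 0 * (List.ofFn fun i : Fin n => F * b ((i : ℕ) + 1) - b ((i : ℕ) + 1) * F).prod)
      (∑ j ∈ Finset.range (n + 1), (-1 : ℂ) ^ j *
          φ (fun i => if i < j then a i else if i = j then a j * a (j + 1) else a (i + 1))) +
        (-1 : ℂ) ^ (n + 1) * φ (fun i => if i = 0 then a (n + 1) * a 0 else a i) = 0 := by
  intro a φ
  -- `⁅F, x⁆` unfolds to `F * x - x * F`
  change ∑ j ∈ Finset.range (n + 1), (-1 : ℂ) ^ j * τ (charProd F n (mulFace a j)) +
    (-1 : ℂ) ^ (n + 1) * τ (charProd F n fun i => if i = 0 then a (n + 1) * a 0 else a i) = 0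
  rw [sum_neg_one_pow_mul_map_charProd_mulFace, charProd_mul_head, hτ, pow_succ]
  ring

/-- The character `φ(a⁰, …, aⁿ) = τ(a⁰ [F,a¹] ⋯ [F,aⁿ])` of the cycle associated to `F`
and a trace `τ` is a Hochschild cocycle: its Hochschild coboundary `bφ` vanishes. -/
theorem stmt_7 {A : Type*} [Ring A] [Algebra ℂ A] (τ : A →ₗ[ℂ] ℂ)
    (hτ : ∀ x y : A, τ (x * y) = τ (y * x)) (F : A) (n : ℕ) (hn : 1 ≤ n) :
    ∀ a : ℕ → A,
      let φ : (ℕ → A) → ℂ := fun b =>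
        τ (b 0 * (List.ofFn fun i : Fin n => F * b ((i : ℕ) + 1) - b ((i : ℕ) + 1) * F).prod)
      (∑ j ∈ Finset.range (n + 1), (-1 : ℂ) ^ j *
          φ (fun i => if i < j then a i else if i = j then a j * a (j + 1) else a (i + 1))) +
        (-1 : ℂ) ^ (n + 1) * φ (fun i => if i = 0 then a (n + 1) * a 0 else a i) = 0 :=
  stmt_7_general τ hτ F n
end

section
/- Let C > 0 and let f, g, h : ℝ → ℝ be nonnegative functions that are nondecreasing on [1, ∞) and satisfy: f(μ) ≤ g(μ) + h(μ) ≤ f(2μ) for all μ ≥ 1, and g(μ) ≤ C·log μ and h(μ) ≤ C·log μ for all μ ≥ e. For Λ > e define the Cesàro mean τ_Λ(F) = (1/log Λ) · ∫_{e}^{Λ} F(μ)/(μ · log μ) dμ. Then there exists Λ₀ > e such that for all Λ ≥ Λ₀, |τ_Λ(f) − τ_Λ(g) − τ_Λ(h)| ≤ 3C · log(log Λ) / log Λ. -/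
/-!
Integrating `f ≤ g + h ≤ f(2·)` against `dμ / (μ log μ)` squeezes `∫ g + ∫ h` between `∫ f` and
`∫ f(2μ) dμ / (μ log μ)`, which the substitution `ν = 2μ` turns into
`∫_{2e}^{2Λ} f(ν) dν / (ν log (ν/2))`. Since `f ≤ 2C log`, replacing the weight `1 / (ν log (ν/2))`
by `1 / (ν log ν)` costs at most `2C log 2 ∫_{2e}^{2Λ} dν / (ν log (ν/2)) = 2C log 2 · log log Λ`,
and moving the interval `[2e, 2Λ]` back to `[e, Λ]` costs at most `∫_Λ^{2Λ} 2C dν / ν = 2C log 2`.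
So the defect is at most `2C log 2 (log log Λ + 1) ≤ 3C log log Λ` as soon as `log log Λ ≥ 2`.
-/

open Real Set intervalIntegral MeasureTheory

theorem MonotoneOn.intervalIntegrable_div {F w : ℝ → ℝ} {a b : ℝ}
    (hF : MonotoneOn F (uIcc a b)) (hw : ContinuousOn w (uIcc a b))
    (hw0 : ∀ x ∈ uIcc a b, w x ≠ 0) :
    IntervalIntegrable (fun x => F x / w x) volume a b :=
  hF.intervalIntegrable.mul_continuousOn (hw.inv₀ hw0)

theorem intervalIntegrable_div_mul_log {F : ℝ → ℝ} {a b c : ℝ} (hc : 1 < c)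
    (hF : MonotoneOn F (Ici c)) (ha : c ≤ a) (hb : c ≤ b) :
    IntervalIntegrable (fun x => F x / (x * log x)) volume a b := by
  have hsub : uIcc a b ⊆ Ici c := fun x hx => (le_min ha hb).trans hx.1
  refine (hF.mono hsub).intervalIntegrable_div continuous_mul_log.continuousOn fun x hx => ?_
  have hx : 1 < x := hc.trans_le (hsub hx)
  have := log_pos hx
  positivity

theorem intervalIntegrable_div_mul_log_div_two {F : ℝ → ℝ} {a b c : ℝ} (hc : 2 < c)
    (hF : MonotoneOn F (Ici c)) (ha : c ≤ a) (hb : c ≤ b) :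
    IntervalIntegrable (fun x => F x / (x * log (x / 2))) volume a b := by
  have hsub : uIcc a b ⊆ Ici c := fun x hx => (le_min ha hb).trans hx.1
  have hx2 : ∀ x ∈ uIcc a b, 2 < x := fun x hx => hc.trans_le (hsub hx)
  refine (hF.mono hsub).intervalIntegrable_div ?_ fun x hx => ?_
  · exact continuousOn_id.mul (continuousOn_log.comp (continuousOn_id.div_const 2)
      fun x hx => by simp only [mem_compl_iff, mem_singleton_iff]; linarith [hx2 x hx])
  · have := log_pos (by linarith [hx2 x hx] : 1 < x / 2)
    have := hx2 x hx
    positivity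

theorem integral_comp_two_mul_div_mul_log (F : ℝ → ℝ) (a b : ℝ) :
    ∫ x in a..b, F (2 * x) / (x * log x) = ∫ x in 2 * a..2 * b, F x / (x * log (x / 2)) := by
  have hpt : ∀ x, F (2 * x) / (x * log x) = 2 * (F (2 * x) / (2 * x * log (2 * x / 2))) := by
    intro x
    rw [mul_div_cancel_left₀ x two_ne_zero, mul_assoc, mul_div_assoc',
      mul_div_mul_left _ _ two_ne_zero]
  simp only [hpt, intervalIntegral.integral_const_mul,
    integral_comp_mul_left (fun x => F x / (x * log (x / 2))) two_ne_zero, smul_eq_mul]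
  rw [← mul_assoc, mul_inv_cancel₀ two_ne_zero, one_mul]

theorem integral_one_div_mul_log {a b : ℝ} (ha : 1 < a) (hb : 1 < b) :
    ∫ x in a..b, 1 / (x * log x) = log (log b) - log (log a) := by
  have hx1 : ∀ x ∈ uIcc a b, 1 < x := fun x hx => lt_of_lt_of_le (lt_min ha hb) hx.1
  refine integral_eq_sub_of_hasDerivAt (f := fun x => log (log x)) (fun x hx => ?_)
    (intervalIntegrable_div_mul_log (lt_min ha hb) monotoneOn_const (min_le_left a b)
      (min_le_right a b))
  have hx := hx1 x hx
  exact ((hasDerivAt_log (by positivity)).log (log_pos hx).ne').congr_deriv (by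
    rw [inv_eq_one_div, div_div])

theorem div_mul_log_div_two_le {x y K : ℝ} (hx : 2 < x) (hyK : y ≤ K * log x) :
    y / (x * log (x / 2)) ≤ y / (x * log x) + K * log 2 * (1 / (x * log (x / 2))) := by
  have hlog : log (x / 2) = log x - log 2 := log_div (by positivity) two_ne_zero
  have hv : 0 < log (x / 2) := log_pos (by linarith)
  have hu : 0 < log x := log_pos (by linarith)
  have hsplit :
      y / (x * log (x / 2)) = y / (x * log x) + y * log 2 / (x * log x * log (x / 2)) := by
    field_simp
    rw [hlog]
    ring
  have hbound : y * log 2 / (x * log x * log (x / 2)) ≤ K * log 2 * (1 / (x * log (x / 2))) :=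
    calc y * log 2 / (x * log x * log (x / 2))
        ≤ K * log x * log 2 / (x * log x * log (x / 2)) := by gcongr
      _ = K * log 2 * (1 / (x * log (x / 2))) := by field_simp
  linarith

theorem integral_div_mul_log_mono {F G : ℝ → ℝ} {a b : ℝ} (ha : 1 < a) (hab : a ≤ b)
    (hF : MonotoneOn F (Ici a)) (hG : MonotoneOn G (Ici a)) (hFG : ∀ x ∈ Icc a b, F x ≤ G x) :
    ∫ x in a..b, F x / (x * log x) ≤ ∫ x in a..b, G x / (x * log x) :=
  integral_mono_on hab (intervalIntegrable_div_mul_log ha hF le_rfl hab)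
    (intervalIntegrable_div_mul_log ha hG le_rfl hab) fun x hx =>
      div_le_div_of_nonneg_right (hFG x hx)
        (mul_nonneg (by linarith [hx.1]) (log_nonneg (by linarith [hx.1])))

section Doubling

variable {f : ℝ → ℝ} {C a b : ℝ}

theorem integral_dilated_interval_div_mul_log_le (ha : 1 < a) (hab : a ≤ b)
    (hfm : MonotoneOn f (Ici a)) (hf0 : ∀ x ≥ a, 0 ≤ f x) (hfC : ∀ x ≥ a, f x ≤ C * log x) :
    ∫ x in 2 * a..2 * b, f x / (x * log x) ≤ (∫ x in a..b, f x / (x * log x)) + C * log 2 := by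
  have hint : ∀ c d, a ≤ c → a ≤ d → IntervalIntegrable (fun x => f x / (x * log x)) volume c d :=
    fun _ _ => intervalIntegrable_div_mul_log ha hfm
  have hshift : (∫ x in 2 * a..2 * b, f x / (x * log x)) - ∫ x in a..b, f x / (x * log x) =
      (∫ x in b..2 * b, f x / (x * log x)) - ∫ x in a..2 * a, f x / (x * log x) := by
    rw [integral_interval_sub_interval_comm (hint (2 * a) (2 * b) (by linarith) (by linarith))
      (hint a b le_rfl hab) (hint (2 * a) a (by linarith) le_rfl), integral_symm a, integral_symm b]
    ring
  have hhead : 0 ≤ ∫ x in a..2 * a, f x / (x * log x) :=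
    integral_nonneg (by linarith) fun x hx => by
      have := log_pos (by linarith [hx.1] : 1 < x)
      have := hf0 x hx.1
      have : 0 < x := by linarith [hx.1]
      positivity
  have htail : ∫ x in b..2 * b, f x / (x * log x) ≤ C * log 2 := by
    calc ∫ x in b..2 * b, f x / (x * log x)
        ≤ ∫ x in b..2 * b, C * x⁻¹ :=
          integral_mono_on (by linarith) (hint b (2 * b) hab (by linarith))
            ((intervalIntegrable_inv (fun x hx => (lt_of_lt_of_le
              (lt_min (by linarith) (by linarith) : 0 < min b (2 * b)) hx.1).ne')
              continuousOn_id).const_mul C)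
            fun x hx => by
              have := log_pos (by linarith [hx.1] : 1 < x)
              calc f x / (x * log x) ≤ C * log x / (x * log x) :=
                    div_le_div_of_nonneg_right (hfC x (by linarith [hx.1]))
                      (mul_pos (by linarith [hx.1]) this).le
                _ = C * x⁻¹ := by field_simp
      _ = C * log 2 := by
          rw [intervalIntegral.integral_const_mul, integral_inv_of_pos (by linarith) (by linarith),
            mul_div_cancel_right₀ _ (by linarith : b ≠ 0)]
  linarith

theorem integral_comp_two_mul_div_mul_log_le (ha : 1 < a) (hab : a ≤ b)
    (hfm : MonotoneOn f (Ici a)) (hf0 : ∀ x ≥ a, 0 ≤ f x) (hfC : ∀ x ≥ a, f x ≤ C * log x) :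
    ∫ x in a..b, f (2 * x) / (x * log x) ≤
      (∫ x in a..b, f x / (x * log x)) + C * log 2 * (log (log b) - log (log a) + 1) := by
  have h2a : 2 < 2 * a := by linarith
  have hmono : MonotoneOn f (Ici (2 * a)) := hfm.mono (Ici_subset_Ici.2 (by linarith))
  have hψ : IntervalIntegrable (fun x => f x / (x * log (x / 2))) volume (2 * a) (2 * b) :=
    intervalIntegrable_div_mul_log_div_two h2a hmono le_rfl (by linarith)
  have hφ : IntervalIntegrable (fun x => f x / (x * log x)) volume (2 * a) (2 * b) :=
    intervalIntegrable_div_mul_log (by linarith) hmono le_rfl (by linarith)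
  have hκ : IntervalIntegrable (fun x => C * log 2 * (1 / (x * log (x / 2)))) volume
      (2 * a) (2 * b) :=
    (intervalIntegrable_div_mul_log_div_two h2a monotoneOn_const le_rfl (by linarith)).const_mul _
  have hsubst_one := integral_comp_two_mul_div_mul_log (fun _ => 1) a b
  calc ∫ x in a..b, f (2 * x) / (x * log x)
      = ∫ x in 2 * a..2 * b, f x / (x * log (x / 2)) := integral_comp_two_mul_div_mul_log f a b
    _ ≤ ∫ x in 2 * a..2 * b, (f x / (x * log x) + C * log 2 * (1 / (x * log (x / 2)))) :=
        integral_mono_on (by linarith) hψ (hφ.add hκ) fun x hx =>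
          div_mul_log_div_two_le (by linarith [hx.1]) (hfC x (by linarith [hx.1]))
    _ = (∫ x in 2 * a..2 * b, f x / (x * log x)) + C * log 2 * (log (log b) - log (log a)) := by
        rw [intervalIntegral.integral_add hφ hκ, intervalIntegral.integral_const_mul, ← hsubst_one,
          integral_one_div_mul_log ha (by linarith)]
    _ ≤ _ := by
        linarith [integral_dilated_interval_div_mul_log_le ha hab hfm hf0 hfC]

end Doubling

theorem abs_one_div_mul_sub_sub_le {x y z s B : ℝ} (hs : 0 < s) (hlower : x ≤ y + z)
    (hupper : y + z ≤ x + B) :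
    |1 / s * x - 1 / s * y - 1 / s * z| ≤ B / s := by
  rw [show 1 / s * x - 1 / s * y - 1 / s * z = -((y + z - x) / s) by ring, abs_neg,
    abs_of_nonneg (div_nonneg (by linarith) hs.le)]
  exact div_le_div_of_nonneg_right (by linarith) hs.le

theorem stmt_8_general (C : ℝ) (hC : 0 < C) (f g h : ℝ → ℝ)
    (hf0 : ∀ x, 0 ≤ f x)
    (hfm : MonotoneOn f (Set.Ici 1)) (hgm : MonotoneOn g (Set.Ici 1))
    (hhm : MonotoneOn h (Set.Ici 1))
    (hbound : ∀ μ ≥ (1 : ℝ), f μ ≤ g μ + h μ ∧ g μ + h μ ≤ f (2 * μ))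
    (hlog : ∀ μ ≥ Real.exp 1, g μ ≤ C * Real.log μ ∧ h μ ≤ C * Real.log μ) :
    ∃ Λ₀ > Real.exp 1, ∀ Λ ≥ Λ₀,
      |(1 / Real.log Λ) * (∫ μ in (Real.exp 1)..Λ, f μ / (μ * Real.log μ))
          - (1 / Real.log Λ) * (∫ μ in (Real.exp 1)..Λ, g μ / (μ * Real.log μ))
          - (1 / Real.log Λ) * (∫ μ in (Real.exp 1)..Λ, h μ / (μ * Real.log μ))|
        ≤ 3 * C * Real.log (Real.log Λ) / Real.log Λ := by
  have he1 : 1 < exp 1 := one_lt_exp_iff.2 one_pos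
  have he2 : 1 < exp 2 := one_lt_exp_iff.2 two_pos
  refine ⟨exp (exp 2), exp_lt_exp.2 he2, fun Λ hΛ => ?_⟩
  have heΛ : exp 1 ≤ Λ := (exp_lt_exp.2 he2).le.trans hΛ
  have hlogΛ : exp 2 ≤ log Λ := (le_log_iff_exp_le (by linarith)).2 hΛ
  have hloglogΛ : 2 ≤ log (log Λ) := (le_log_iff_exp_le (by linarith [exp_pos 2])).2 hlogΛ
  have hmono : ∀ {F : ℝ → ℝ}, MonotoneOn F (Ici 1) → MonotoneOn F (Ici (exp 1)) :=
    fun hF => hF.mono (Ici_subset_Ici.2 he1.le)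
  have hf2m : MonotoneOn (fun μ => f (2 * μ)) (Ici (exp 1)) := fun x hx y hy hxy =>
    hmono hfm (by rw [mem_Ici] at hx ⊢; linarith) (by rw [mem_Ici] at hy ⊢; linarith) (by linarith)
  have hsum : ∫ μ in exp 1..Λ, (g μ + h μ) / (μ * log μ) =
      (∫ μ in exp 1..Λ, g μ / (μ * log μ)) + ∫ μ in exp 1..Λ, h μ / (μ * log μ) := by
    simp only [add_div]
    exact intervalIntegral.integral_add (intervalIntegrable_div_mul_log he1 (hmono hgm) le_rfl heΛ)
      (intervalIntegrable_div_mul_log he1 (hmono hhm) le_rfl heΛ)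
  have hlower := integral_div_mul_log_mono he1 heΛ (hmono hfm) (hmono (hgm.add hhm))
    fun μ hμ => (hbound μ (by linarith [hμ.1])).1
  have hupper := integral_div_mul_log_mono he1 heΛ (hmono (hgm.add hhm)) hf2m
    fun μ hμ => (hbound μ (by linarith [hμ.1])).2
  have hdoubling := integral_comp_two_mul_div_mul_log_le (C := 2 * C) he1 heΛ (hmono hfm)
    (fun x _ => hf0 x) fun x hx => by linarith [(hbound x (by linarith)).1, hlog x hx]
  rw [log_exp, log_one, sub_zero] at hdoubling
  have hconst : 2 * C * log 2 * (log (log Λ) + 1) ≤ 3 * C * log (log Λ) := by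
    have hlog2 : log 2 ≤ 1 := (log_le_sub_one_of_pos two_pos).trans (by norm_num)
    nlinarith [mul_le_mul_of_nonneg_left hlog2 (by positivity : 0 ≤ 2 * C * (log (log Λ) + 1))]
  exact abs_one_div_mul_sub_sub_le (by linarith [exp_pos 2]) (hlower.trans_eq hsum)
    (by linarith)

/-- Asymptotic additivity of the Dixmier trace functionals `τ_Λ`: under the hypotheses
satisfied by the partial trace sums of positive infinitesimals of order 1, one has
`|τ_Λ(f) - τ_Λ(g) - τ_Λ(h)| ≤ 3C log(log Λ)/log Λ` for all large `Λ`. -/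
theorem stmt_8 (C : ℝ) (hC : 0 < C) (f g h : ℝ → ℝ)
    (hf0 : ∀ x, 0 ≤ f x) (hg0 : ∀ x, 0 ≤ g x) (hh0 : ∀ x, 0 ≤ h x)
    (hfm : MonotoneOn f (Set.Ici 1)) (hgm : MonotoneOn g (Set.Ici 1))
    (hhm : MonotoneOn h (Set.Ici 1))
    (hbound : ∀ μ ≥ (1 : ℝ), f μ ≤ g μ + h μ ∧ g μ + h μ ≤ f (2 * μ))
    (hlog : ∀ μ ≥ Real.exp 1, g μ ≤ C * Real.log μ ∧ h μ ≤ C * Real.log μ) :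
    ∃ Λ₀ > Real.exp 1, ∀ Λ ≥ Λ₀,
      |(1 / Real.log Λ) * (∫ μ in (Real.exp 1)..Λ, f μ / (μ * Real.log μ))
          - (1 / Real.log Λ) * (∫ μ in (Real.exp 1)..Λ, g μ / (μ * Real.log μ))
          - (1 / Real.log Λ) * (∫ μ in (Real.exp 1)..Λ, h μ / (μ * Real.log μ))|
        ≤ 3 * C * Real.log (Real.log Λ) / Real.log Λ :=
  stmt_8_general C hC f g h hf0 hfm hgm hhm hbound hlog
end

section
/- Let E > 0 and Λ > 0 be real numbers with E/(2π) ≤ Λ², and set c = E/(2π). Then the Lebesgue measure of the region D = {(p, q) ∈ ℝ² : p·q ≥ 0, |p| ≤ Λ, |q| ≤ Λ, p·q ≤ c} is 4c·log Λ − 2c·(log c − 1); equivalently, (1/2)·∫_D dp dq = (2E/2π)·log Λ − (E/2π)·(log(E/2π) − 1). -/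
/-!
For `p ≠ 0` the vertical section of `D` over `p` is an interval of length `min Λ (c / |p|)`
(and it is empty for `|p| > Λ`), so the area of `D` is `∫_{-Λ}^{Λ} min Λ (c / |p|) dp`.
The integrand is even; on `[0, Λ]` it equals `Λ` up to `c / Λ` and `c / p` afterwards, giving
`2 (c + c log (Λ² / c))`.
-/

open MeasureTheory Set intervalIntegral

theorem intervalIntegral.integral_neg_self_eq_two_mul_of_even {f : ℝ → ℝ} {a : ℝ}
    (hf : ∀ x, f (-x) = f x) (h_int : IntervalIntegrable f volume 0 a) :
    ∫ x in -a..a, f x = 2 * ∫ x in 0..a, f x := by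
  have h_left : IntervalIntegrable f volume (-a) 0 := by
    simpa only [hf, neg_zero] using ((IntervalIntegrable.iff_comp_neg enorm_ne_top).1 h_int).symm
  have h_reflect : ∫ x in -a..0, f x = ∫ x in 0..a, f x := by
    simpa only [hf, neg_zero] using (integral_comp_neg (a := 0) (b := a) f).symm
  rw [← integral_add_adjacent_intervals h_left h_int, h_reflect, two_mul]

def phaseRegion (Λ c : ℝ) : Set (ℝ × ℝ) :=
  {x | 0 ≤ x.1 * x.2 ∧ |x.1| ≤ Λ ∧ |x.2| ≤ Λ ∧ x.1 * x.2 ≤ c}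

section

variable {Λ c : ℝ}

theorem measurableSet_phaseRegion (Λ c : ℝ) : MeasurableSet (phaseRegion Λ c) :=
  (measurableSet_le measurable_const (measurable_fst.mul measurable_snd)).inter <|
    (measurableSet_le measurable_fst.abs measurable_const).inter <|
      (measurableSet_le measurable_snd.abs measurable_const).inter <|
        measurableSet_le (measurable_fst.mul measurable_snd) measurable_const

theorem neg_mem_phaseRegion {x : ℝ × ℝ} : -x ∈ phaseRegion Λ c ↔ x ∈ phaseRegion Λ c := by
  simp only [phaseRegion, mem_ofPred_eq, Prod.fst_neg, Prod.snd_neg, neg_mul_neg, abs_neg]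

theorem preimage_mk_neg_phaseRegion (p : ℝ) :
    Prod.mk (-p) ⁻¹' phaseRegion Λ c = -(Prod.mk p ⁻¹' phaseRegion Λ c) := by
  ext q
  rw [mem_neg, mem_preimage, mem_preimage, ← neg_mem_phaseRegion, Prod.neg_mk, neg_neg]

theorem preimage_mk_phaseRegion_of_pos {p : ℝ} (hp : 0 < p) (hpΛ : p ≤ Λ) :
    Prod.mk p ⁻¹' phaseRegion Λ c = Icc 0 (min Λ (c / p)) := by
  ext q
  simp only [phaseRegion, mem_preimage, mem_ofPred_eq, mem_Icc, le_min_iff, abs_le,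
    le_div_iff₀' hp, mul_nonneg_iff_of_pos_left hp]
  constructor
  · rintro ⟨hq, -, ⟨-, hqΛ⟩, hpq⟩
    exact ⟨hq, hqΛ, hpq⟩
  · rintro ⟨hq, hqΛ, hpq⟩
    exact ⟨hq, ⟨by linarith, hpΛ⟩, ⟨by linarith, hqΛ⟩, hpq⟩

theorem preimage_mk_phaseRegion_of_lt_abs {p : ℝ} (hp : Λ < |p|) :
    Prod.mk p ⁻¹' phaseRegion Λ c = ∅ :=
  eq_empty_of_forall_notMem fun _ hq => hq.2.1.not_gt hp

theorem volume_preimage_mk_phaseRegion {p : ℝ} (hp : p ≠ 0) :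
    volume (Prod.mk p ⁻¹' phaseRegion Λ c) =
      (Icc (-Λ) Λ).indicator (fun p => ENNReal.ofReal (min Λ (c / |p|))) p := by
  wlog hpos : 0 < p generalizing p
  · have hneg := this (neg_ne_zero.2 hp) (neg_pos.2 ((not_lt.1 hpos).lt_of_ne hp))
    rw [preimage_mk_neg_phaseRegion, Measure.measure_neg] at hneg
    rw [hneg]
    simp only [indicator_apply, mem_Icc, abs_neg, neg_le_neg_iff, neg_le (a := p), and_comm]
  rcases le_or_gt p Λ with hpΛ | hpΛ
  · rw [preimage_mk_phaseRegion_of_pos hpos hpΛ, Real.volume_Icc, sub_zero,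
      indicator_of_mem (show p ∈ Icc (-Λ) Λ from ⟨by linarith, hpΛ⟩), abs_of_pos hpos]
  · rw [preimage_mk_phaseRegion_of_lt_abs (by rwa [abs_of_pos hpos]), measure_empty,
      indicator_of_notMem fun h => hpΛ.not_ge h.2]

theorem intervalIntegrable_min_div_abs (hΛ : 0 ≤ Λ) (hc : 0 ≤ c) (a b : ℝ) :
    IntervalIntegrable (fun p => min Λ (c / |p|)) volume a b :=
  intervalIntegrable_const.mono_fun'
    (measurable_const.min (measurable_const.div measurable_abs)).aestronglyMeasurable <|
    Filter.Eventually.of_forall fun p => show ‖min Λ (c / |p|)‖ ≤ Λ by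
    rw [Real.norm_of_nonneg (by positivity)]
    exact min_le_left _ _

theorem volume_phaseRegion (hΛ : 0 ≤ Λ) (hc : 0 ≤ c) :
    volume (phaseRegion Λ c) = ENNReal.ofReal (∫ p in -Λ..Λ, min Λ (c / |p|)) := by
  have h_int := (intervalIntegrable_iff_integrableOn_Icc_of_le (by linarith)).1
    (intervalIntegrable_min_div_abs hΛ hc (-Λ) Λ)
  rw [integral_of_le (by linarith), ← integral_Icc_eq_integral_Ioc,
    ofReal_integral_eq_lintegral_ofReal h_int (Filter.Eventually.of_forall fun p => by positivity),
    ← lintegral_indicator measurableSet_Icc, Measure.volume_eq_prod,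
    Measure.prod_apply (measurableSet_phaseRegion Λ c)]
  refine lintegral_congr_ae ?_
  filter_upwards [compl_mem_ae_iff.2 (Real.volume_singleton (a := 0))] with p hp
  exact volume_preimage_mk_phaseRegion hp

theorem integral_zero_min_div_abs (hΛ : 0 < Λ) (hc : 0 < c) (hcΛ : c ≤ Λ ^ 2) :
    ∫ p in 0..Λ, min Λ (c / |p|) = c + c * Real.log (Λ ^ 2 / c) := by
  obtain ⟨a, ha, rfl⟩ : ∃ a, 0 < a ∧ c = Λ * a := ⟨c / Λ, by positivity, by field_simp⟩
  have haΛ : a ≤ Λ := le_of_mul_le_mul_left (by rwa [← sq]) hΛ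
  have h_const : ∫ p in 0..a, min Λ (Λ * a / |p|) = Λ * a := by
    rw [intervalIntegral.integral_congr_ae (g := fun _ => Λ), intervalIntegral.integral_const,
      smul_eq_mul, sub_zero, mul_comm]
    refine Filter.Eventually.of_forall fun p hp => ?_
    rw [uIoc_of_le ha.le] at hp
    refine min_eq_left ?_
    rw [abs_of_pos hp.1, le_div_iff₀ hp.1]
    exact mul_le_mul_of_nonneg_left hp.2 hΛ.le
  have h_log : ∫ p in a..Λ, min Λ (Λ * a / |p|) = Λ * a * Real.log (Λ ^ 2 / (Λ * a)) := by
    have hp_pos : ∀ p ∈ uIcc a Λ, 0 < p := fun p hp => ha.trans_le (uIcc_of_le haΛ ▸ hp).1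
    rw [intervalIntegral.integral_congr (g := fun p => Λ * a * p⁻¹),
      intervalIntegral.integral_const_mul, integral_inv fun h0 => (hp_pos 0 h0).false]
    · congr 2
      field_simp
    intro p hp
    show min Λ (Λ * a / |p|) = Λ * a * p⁻¹
    rw [abs_of_pos (hp_pos p hp), min_eq_right, div_eq_mul_inv]
    rw [div_le_iff₀ (hp_pos p hp)]
    exact mul_le_mul_of_nonneg_left (uIcc_of_le haΛ ▸ hp).1 hΛ.le
  rw [← integral_add_adjacent_intervals (intervalIntegrable_min_div_abs hΛ.le hc.le 0 a)
    (intervalIntegrable_min_div_abs hΛ.le hc.le a Λ), h_const, h_log]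

end

/-- Semiclassical phase space count: the Lebesgue area of
`D = {(p,q) : pq ≥ 0, |p| ≤ Λ, |q| ≤ Λ, pq ≤ E/2π}` equals
`4(E/2π) log Λ - 2(E/2π)(log(E/2π) - 1)`. -/
theorem stmt_10 (E Λ : ℝ) (hE : 0 < E) (hΛ : 0 < Λ) (h : E / (2 * Real.pi) ≤ Λ ^ 2) :
    (MeasureTheory.volume {x : ℝ × ℝ | 0 ≤ x.1 * x.2 ∧ |x.1| ≤ Λ ∧ |x.2| ≤ Λ ∧
        x.1 * x.2 ≤ E / (2 * Real.pi)}).toReal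
      = 4 * (E / (2 * Real.pi)) * Real.log Λ
        - 2 * (E / (2 * Real.pi)) * (Real.log (E / (2 * Real.pi)) - 1) := by
  set c := E / (2 * Real.pi)
  have hc : 0 < c := by positivity
  have h_log_nonneg : 0 ≤ Real.log (Λ ^ 2 / c) := Real.log_nonneg ((one_le_div hc).2 h)
  have h_log : Real.log (Λ ^ 2 / c) = 2 * Real.log Λ - Real.log c := by
    rw [Real.log_div (by positivity) hc.ne', Real.log_pow, Nat.cast_ofNat]
  show (volume (phaseRegion Λ c)).toReal = _
  rw [volume_phaseRegion hΛ.le hc.le,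
    integral_neg_self_eq_two_mul_of_even (fun p => by rw [abs_neg])
      (intervalIntegrable_min_div_abs hΛ.le hc.le 0 Λ),
    integral_zero_min_div_abs hΛ hc h, ENNReal.toReal_ofReal (by positivity), h_log]
  ring
end

section
/- Let p be a nonzero vector in four-dimensional Euclidean space ℝ⁴. Then the one-loop Feynman integral with momentum cutoff λ diverges logarithmically with a universal coefficient: there exists a real constant C (depending on p) such that the quantity ∫_{{k ∈ ℝ⁴ : ‖k‖ ≤ λ}} 1/(‖k‖² · ‖k + p‖²) dk − 2π² · log λ converges to C as λ → ∞. -/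
/-!
Subtract the counterterm `‖k‖⁻⁴ 𝟙{‖k‖ ≥ 1}`: in polar coordinates its integral over the ball of
radius `λ ≥ 1` is `|S³| ∫₁^λ dr / r = 2π² log λ`. What remains is integrable on all of `ℝ⁴`.
Near `0` and `-p` the integrand is dominated by a multiple of `‖k‖⁻² + ‖k + p‖⁻²`, integrable
in dimension `> 2`, and for large `k` the difference is `O(‖p‖ ‖k‖⁻⁵)`, integrable in dimension `< 5`.
The constant is the integral of the difference, reached along the exhausting balls.
-/

open MeasureTheory Metric Set Filter Module

lemma one_div_sq_mul_sq_le {a b c : ℝ} (ha : 0 ≤ a) (hb : 0 ≤ b) (hc : 0 < c)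
    (habc : c ≤ a + b) : 1 / (a ^ 2 * b ^ 2) ≤ 2 / c ^ 2 * ((a ^ 2)⁻¹ + (b ^ 2)⁻¹) := by
  rcases ha.eq_or_lt with rfl | ha
  · rw [zero_pow two_ne_zero, zero_mul, div_zero]
    positivity
  rcases hb.eq_or_lt with rfl | hb
  · rw [zero_pow two_ne_zero, mul_zero, div_zero]
    positivity
  rw [div_le_iff₀ (by positivity)]
  field_simp
  -- `c² ≤ (a + b)² ≤ 2 (a² + b²)`
  nlinarith [sq_nonneg (a - b)]

lemma abs_one_div_sq_mul_sq_sub_le {a b c : ℝ} (ha : 0 < a) (hca : 2 * c ≤ a)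
    (hab : |a - b| ≤ c) : |1 / (a ^ 2 * b ^ 2) - (a ^ 4)⁻¹| ≤ 12 * c / a ^ 5 := by
  have hc : 0 ≤ c := (abs_nonneg _).trans hab
  obtain ⟨hab₁, hab₂⟩ := abs_le.1 hab
  have hb : a / 2 ≤ b := by linarith
  have hb0 : 0 < b := by linarith
  have hdiff : |a ^ 2 - b ^ 2| ≤ 3 * a * c := by
    rw [show a ^ 2 - b ^ 2 = (a - b) * (a + b) by ring, abs_mul,
      abs_of_pos (show 0 < a + b by linarith)]
    nlinarith [mul_le_mul_of_nonneg_right hab (show 0 ≤ a + b by linarith)]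
  calc |1 / (a ^ 2 * b ^ 2) - (a ^ 4)⁻¹| = |a ^ 2 - b ^ 2| / (a ^ 4 * b ^ 2) := by
        rw [← abs_of_pos (by positivity : 0 < a ^ 4 * b ^ 2), ← abs_div]
        field_simp
    _ ≤ 3 * a * c / (a ^ 4 * (a / 2) ^ 2) := by gcongr
    _ = 12 * c / a ^ 5 := by field_simp; ring

section

variable {G F : Type*} [NormedAddCommGroup G] [MeasurableSpace G] [BorelSpace G]
  [NormedAddCommGroup F] {μ : Measure G} [μ.IsAddRightInvariant]

theorem MeasureTheory.LocallyIntegrable.comp_add_right {f : G → F} (hf : LocallyIntegrable f μ)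
    (p : G) : LocallyIntegrable (fun x => f (x + p)) μ := by
  rw [← map_add_right_eq_self μ p] at hf
  exact (locallyIntegrable_map_homeomorph (Homeomorph.addRight p)).1 hf

end

section

variable {E : Type*} [NormedAddCommGroup E] [NormedSpace ℝ E] [FiniteDimensional ℝ E]
  [MeasurableSpace E] [BorelSpace E] {μ : Measure E} [μ.IsAddHaarMeasure]

noncomputable def oneLoopIntegrand (p k : E) : ℝ := 1 / (‖k‖ ^ 2 * ‖k + p‖ ^ 2)

noncomputable def logCounterterm (k : E) : ℝ := if 1 ≤ ‖k‖ then (‖k‖ ^ 4)⁻¹ else 0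

theorem locallyIntegrable_inv_norm_sq (hd : 2 < finrank ℝ E) :
    LocallyIntegrable (fun x : E => (‖x‖ ^ 2)⁻¹) μ := by
  refine locallyIntegrable_of_norm_le_rpow (C := 1) (α := 2) (by omega) (by exact_mod_cast hd)
    (ae_of_all _ fun x => ?_) (by fun_prop)
  rw [one_mul, Real.rpow_neg (norm_nonneg x), Real.norm_of_nonneg (by positivity)]
  norm_cast

theorem locallyIntegrable_oneLoopIntegrand (hd : 2 < finrank ℝ E) {p : E} (hp : p ≠ 0) :
    LocallyIntegrable (oneLoopIntegrand p) μ := by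
  have hsum := (locallyIntegrable_inv_norm_sq (μ := μ) hd).add
    ((locallyIntegrable_inv_norm_sq hd).comp_add_right p)
  have hmeas : Measurable (oneLoopIntegrand p : E → ℝ) := by
    unfold oneLoopIntegrand
    fun_prop
  refine (hsum.smul (2 / ‖p‖ ^ 2)).mono hmeas.aestronglyMeasurable (ae_of_all _ fun k => ?_)
  have hk : ‖p‖ ≤ ‖k‖ + ‖k + p‖ := by
    simpa [add_comm] using norm_sub_le (k + p) k
  simp only [oneLoopIntegrand, Pi.smul_apply, Pi.add_apply, smul_eq_mul]
  rw [Real.norm_of_nonneg (by positivity), Real.norm_of_nonneg (by positivity)]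
  exact one_div_sq_mul_sq_le (norm_nonneg _) (norm_nonneg _) (norm_pos_iff.2 hp) hk

theorem locallyIntegrable_logCounterterm : LocallyIntegrable (logCounterterm : E → ℝ) μ := by
  refine (locallyIntegrable_const (1 : ℝ)).mono ?_ (ae_of_all _ fun k => ?_)
  · exact (Measurable.ite (measurableSet_le measurable_const measurable_norm) (by fun_prop)
      measurable_const).aestronglyMeasurable
  · unfold logCounterterm
    split_ifs with hk
    · rw [norm_one, Real.norm_of_nonneg (by positivity)]
      exact inv_le_one_of_one_le₀ (one_le_pow₀ hk)
    · simp

theorem integrable_oneLoopIntegrand_sub_logCounterterm (hd₂ : 2 < finrank ℝ E)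
    (hd₅ : finrank ℝ E < 5) {p : E} (hp : p ≠ 0) :
    Integrable (fun k => oneLoopIntegrand p k - logCounterterm k) μ := by
  refine ((locallyIntegrable_oneLoopIntegrand hd₂ hp).sub
    locallyIntegrable_logCounterterm).integrable_of_isBigO_cocompact
    (g := fun k : E => (1 + ‖k‖) ^ (-5 : ℝ)) ?_
    ((integrable_one_add_norm (by exact_mod_cast hd₅)).integrableAtFilter _)
  refine Asymptotics.IsBigO.of_bound (384 * ‖p‖) ?_
  filter_upwards [tendsto_norm_cocompact_atTop.eventually_ge_atTop (max (2 * ‖p‖) 1)]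
    with k hk
  obtain ⟨hpk, hk₁⟩ := max_le_iff.1 hk
  have hpow : (1 + ‖k‖) ^ 5 ≤ 32 * ‖k‖ ^ 5 := by
    calc (1 + ‖k‖) ^ 5 ≤ (2 * ‖k‖) ^ 5 := by gcongr; linarith
      _ = 32 * ‖k‖ ^ 5 := by ring
  calc ‖oneLoopIntegrand p k - logCounterterm k‖
      = |1 / (‖k‖ ^ 2 * ‖k + p‖ ^ 2) - (‖k‖ ^ 4)⁻¹| := by
        simp [oneLoopIntegrand, logCounterterm, hk₁]
    _ ≤ 12 * ‖p‖ / ‖k‖ ^ 5 :=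
        abs_one_div_sq_mul_sq_sub_le (by positivity) hpk
          (by simpa using abs_norm_sub_norm_le k (k + p))
    _ ≤ 384 * ‖p‖ * ((1 + ‖k‖) ^ 5)⁻¹ := by
        rw [← div_eq_mul_inv, div_le_div_iff₀ (by positivity) (by positivity)]
        nlinarith [norm_nonneg p]
    _ = 384 * ‖p‖ * ‖(1 + ‖k‖) ^ (-5 : ℝ)‖ := by
        rw [Real.norm_of_nonneg (by positivity), Real.rpow_neg (by positivity)]
        norm_cast

theorem setIntegral_closedBall_logCounterterm (hd : finrank ℝ E = 4) {l : ℝ} (hl : 1 ≤ l) :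
    ∫ k in closedBall (0 : E) l, logCounterterm k ∂μ = 4 * μ.real (ball 0 1) * Real.log l := by
  have : Nontrivial E := Module.nontrivial_of_finrank_pos (R := ℝ) (by omega)
  have hradial : (closedBall (0 : E) l).indicator logCounterterm =
      fun k => (Icc 1 l).indicator (fun r => (r ^ 4)⁻¹) ‖k‖ := by
    ext k
    by_cases h₁ : 1 ≤ ‖k‖ <;> by_cases h₂ : ‖k‖ ≤ l <;> simp [indicator, logCounterterm, h₁, h₂]
  have hshell : (fun y : ℝ => y ^ 3 • (Icc 1 l).indicator (fun r => (r ^ 4)⁻¹) y) =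
      (Icc 1 l).indicator (fun y => y⁻¹) := by
    ext y
    by_cases hy : y ∈ Icc 1 l
    · simp only [indicator_of_mem hy, smul_eq_mul]
      rcases eq_or_ne y 0 with rfl | hy₀
      · simp
      · field_simp
    · simp [indicator_of_notMem hy]
  rw [← integral_indicator measurableSet_closedBall, hradial, integral_fun_norm_addHaar, hd,
    show 4 - 1 = 3 from rfl, hshell, setIntegral_indicator measurableSet_Icc,
    inter_eq_right.2 ((Icc_subset_Ioi_iff hl).2 one_pos), integral_Icc_eq_integral_Ioc,
    ← intervalIntegral.integral_of_le hl, integral_inv_of_pos one_pos (by linarith), div_one]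
  simp only [nsmul_eq_mul, smul_eq_mul]
  push_cast
  ring

end

theorem EuclideanSpace.volume_real_ball_fin_four :
    volume.real (ball (0 : EuclideanSpace ℝ (Fin 4)) 1) = Real.pi ^ 2 / 2 := by
  rw [measureReal_def, InnerProductSpace.volume_ball_of_dim_even (k := 2) (by simp)]
  simp only [ENNReal.ofReal_one, one_pow, one_mul, Nat.factorial_two, Nat.cast_ofNat]
  exact ENNReal.toReal_ofReal (by positivity)

/-- Logarithmic divergence of the one-loop Feynman integral in massless φ⁴ theory:
for `p ≠ 0` in ℝ⁴, `∫_{‖k‖ ≤ λ} dk/(‖k‖²‖k+p‖²) - 2π² log λ` converges as `λ → ∞`. -/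
theorem stmt_11 (p : EuclideanSpace ℝ (Fin 4)) (hp : p ≠ 0) :
    ∃ C : ℝ, Filter.Tendsto
      (fun l : ℝ =>
        (∫ k in Metric.closedBall (0 : EuclideanSpace ℝ (Fin 4)) l,
          1 / (‖k‖ ^ 2 * ‖k + p‖ ^ 2)) - 2 * Real.pi ^ 2 * Real.log l)
      Filter.atTop (nhds C) := by
  have hd : finrank ℝ (EuclideanSpace ℝ (Fin 4)) = 4 := finrank_euclideanSpace_fin
  refine ⟨∫ k, oneLoopIntegrand p k - logCounterterm k, ?_⟩
  refine ((aecover_closedBall (x := 0) tendsto_id).integral_tendsto_of_countably_generated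
    (integrable_oneLoopIntegrand_sub_logCounterterm (by omega) (by omega) hp)).congr' ?_
  filter_upwards [eventually_ge_atTop 1] with l hl
  have hball : IsCompact (closedBall (0 : EuclideanSpace ℝ (Fin 4)) l) := isCompact_closedBall 0 l
  rw [id, integral_sub
    ((locallyIntegrable_oneLoopIntegrand (by omega) hp).integrableOn_isCompact hball)
    (locallyIntegrable_logCounterterm.integrableOn_isCompact hball),
    setIntegral_closedBall_logCounterterm hd hl, EuclideanSpace.volume_real_ball_fin_four]
  unfold oneLoopIntegrand
  ring
end

section
/- In the Klein model of non-Euclidean geometry, Euclid's parallel axiom fails: let B be the open unit ball in the Euclidean plane ℝ², let Δ be a one-dimensional affine subspace (a line) of ℝ² with Δ ∩ B ≠ ∅, and let p ∈ B with p ∉ Δ. Then there exist two distinct lines L₁ ≠ L₂ of ℝ² with p ∈ L₁ and p ∈ L₂ such that L₁ ∩ Δ ∩ B = ∅ and L₂ ∩ Δ ∩ B = ∅. -/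
/-- If `q ∈ Δ` and `p ∉ Δ`, the line through `p` and `q` meets `Δ` only at `q`. -/
lemma aux_line_inter {V : Type*} [NormedAddCommGroup V] [NormedSpace ℝ V]
    (Δ : AffineSubspace ℝ V) {p q : V} (hq : q ∈ Δ) (hpΔ : p ∉ Δ) :
    ((affineSpan ℝ {p, q} : AffineSubspace ℝ V) : Set V) ∩ (Δ : Set V) ⊆ {q} := by
  rintro x ⟨hx1, hx2⟩
  have hx1' : ∃ r : ℝ, r • (q -ᵥ p) = x -ᵥ p := by
    rw [← vadd_left_mem_affineSpan_pair (k := ℝ), vsub_vadd]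
    exact hx1
  obtain ⟨r, hr⟩ := hx1'
  have hxeq : x = r • (q -ᵥ p) +ᵥ p := by rw [hr, vsub_vadd]
  subst hxeq
  by_cases hr : r = 1
  · simp [hr]
  · exfalso
    apply hpΔ
    have hd : (r • (q -ᵥ p) +ᵥ p) -ᵥ q ∈ Δ.direction :=
      AffineSubspace.vsub_mem_direction hx2 hq
    have : (r • (q -ᵥ p) +ᵥ p) -ᵥ q = (1 - r) • (p -ᵥ q) := by
      simp only [vsub_eq_sub, vadd_eq_add, smul_sub, sub_smul, one_smul]
      abel
    rw [this] at hd
    have h1r : (1 - r) ≠ 0 := sub_ne_zero.mpr fun h => hr h.symm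
    have hpq : p -ᵥ q ∈ Δ.direction := by
      have := Δ.direction.smul_mem (1 - r)⁻¹ hd
      rwa [smul_smul, inv_mul_cancel₀ h1r, one_smul] at this
    have := AffineSubspace.vadd_mem_of_mem_direction hpq hq
    rwa [vsub_vadd] at this

lemma aux_main {V : Type*} [NormedAddCommGroup V] [NormedSpace ℝ V]
    (Δ : AffineSubspace ℝ V) {p q : V} (hq : q ∈ Δ) (hpΔ : p ∉ Δ)
    (hqB : q ∉ Metric.ball (0 : V) 1) :
    Module.finrank ℝ (affineSpan ℝ {p, q} : AffineSubspace ℝ V).direction = 1 ∧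
    p ∈ affineSpan ℝ {p, q} ∧
    ((affineSpan ℝ {p, q} : AffineSubspace ℝ V) : Set V) ∩ (Δ : Set V) ∩
      Metric.ball (0 : V) 1 = ∅ := by
  have hpq : p ≠ q := fun h => hpΔ (h ▸ hq)
  refine ⟨?_, ?_, ?_⟩
  · rw [direction_affineSpan, vectorSpan_pair]
    exact finrank_span_singleton (vsub_ne_zero.mpr hpq)
  · exact subset_affineSpan ℝ _ (by simp)
  · apply Set.eq_empty_iff_forall_notMem.mpr
    rintro x ⟨hx1, hx2⟩
    have := aux_line_inter Δ hq hpΔ hx1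
    simp only [Set.mem_singleton_iff] at this
    exact hqB (this ▸ hx2)

/-- Failure of Euclid's parallel axiom in the Klein model: given a line `Δ` meeting the
open unit disc `B` and a point `p ∈ B` off `Δ`, there are two distinct lines through `p`
whose intersections with `Δ` inside `B` are empty. -/
theorem stmt_13 (Δ : AffineSubspace ℝ (EuclideanSpace ℝ (Fin 2)))
    (hΔ : Module.finrank ℝ Δ.direction = 1)
    (hΔB : ((Δ : Set (EuclideanSpace ℝ (Fin 2))) ∩
      Metric.ball (0 : EuclideanSpace ℝ (Fin 2)) 1).Nonempty)
    (p : EuclideanSpace ℝ (Fin 2))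
    (hpB : p ∈ Metric.ball (0 : EuclideanSpace ℝ (Fin 2)) 1)
    (hpΔ : p ∉ Δ) :
    ∃ L₁ L₂ : AffineSubspace ℝ (EuclideanSpace ℝ (Fin 2)),
      Module.finrank ℝ L₁.direction = 1 ∧ Module.finrank ℝ L₂.direction = 1 ∧
      L₁ ≠ L₂ ∧ p ∈ L₁ ∧ p ∈ L₂ ∧
      (L₁ : Set (EuclideanSpace ℝ (Fin 2))) ∩ (Δ : Set (EuclideanSpace ℝ (Fin 2))) ∩
        Metric.ball (0 : EuclideanSpace ℝ (Fin 2)) 1 = ∅ ∧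
      (L₂ : Set (EuclideanSpace ℝ (Fin 2))) ∩ (Δ : Set (EuclideanSpace ℝ (Fin 2))) ∩
        Metric.ball (0 : EuclideanSpace ℝ (Fin 2)) 1 = ∅ := by
  obtain ⟨a, haΔ, -⟩ := hΔB
  -- get a nonzero direction vector
  have hdir : Δ.direction ≠ ⊥ := by
    intro h
    rw [h] at hΔ
    simp at hΔ
  obtain ⟨v, hv, hv0⟩ := Submodule.exists_mem_ne_zero_of_ne_bot hdir
  set t : ℝ := (1 + ‖a‖) / ‖v‖ with ht
  have hvpos : (0:ℝ) < ‖v‖ := norm_pos_iff.mpr hv0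
  have htpos : 0 < t := div_pos (by positivity) hvpos
  have htv : t * ‖v‖ = 1 + ‖a‖ := div_mul_cancel₀ _ (ne_of_gt hvpos)
  set q₁ : EuclideanSpace ℝ (Fin 2) := t • v +ᵥ a with hq₁def
  set q₂ : EuclideanSpace ℝ (Fin 2) := (-t) • v +ᵥ a with hq₂def
  have hq₁Δ : q₁ ∈ Δ :=
    AffineSubspace.vadd_mem_of_mem_direction (Δ.direction.smul_mem t hv) haΔ
  have hq₂Δ : q₂ ∈ Δ :=
    AffineSubspace.vadd_mem_of_mem_direction (Δ.direction.smul_mem (-t) hv) haΔ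
  have hnorm : ∀ s : ℝ, |s| = t → (s • v +ᵥ a) ∉ Metric.ball (0 : EuclideanSpace ℝ (Fin 2)) 1 := by
    intro s hs hmem
    rw [Metric.mem_ball, dist_zero_right] at hmem
    have h1 : ‖s • v‖ ≤ ‖s • v + a‖ + ‖a‖ := by
      have h0 := norm_add_le (s • v + a) (-a)
      rw [norm_neg] at h0
      simpa using h0
    rw [norm_smul, Real.norm_eq_abs, hs] at h1
    rw [htv] at h1
    have : s • v +ᵥ a = s • v + a := rfl
    rw [this] at hmem
    linarith
  have hq₁B : q₁ ∉ Metric.ball (0 : EuclideanSpace ℝ (Fin 2)) 1 :=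
    hnorm t (abs_of_pos htpos)
  have hq₂B : q₂ ∉ Metric.ball (0 : EuclideanSpace ℝ (Fin 2)) 1 :=
    hnorm (-t) (by rw [abs_neg, abs_of_pos htpos])
  have hq12 : q₁ ≠ q₂ := by
    intro h
    rw [hq₁def, hq₂def, vadd_eq_add, vadd_eq_add, add_left_inj, neg_smul] at h
    have h2 : (2 * t) • v = 0 := by
      rw [mul_smul, two_smul]
      exact eq_neg_iff_add_eq_zero.mp h
    rcases smul_eq_zero.mp h2 with h' | h'
    · linarith
    · exact hv0 h'
  obtain ⟨hf1, hp1, he1⟩ := aux_main Δ hq₁Δ hpΔ hq₁B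
  obtain ⟨hf2, hp2, he2⟩ := aux_main Δ hq₂Δ hpΔ hq₂B
  refine ⟨affineSpan ℝ {p, q₁}, affineSpan ℝ {p, q₂}, hf1, hf2, ?_, hp1, hp2, he1, he2⟩
  intro h
  apply hq12
  have hq₂L₁ : q₂ ∈ affineSpan ℝ {p, q₁} := by
    rw [h]; exact subset_affineSpan ℝ _ (by simp)
  have := aux_line_inter Δ hq₁Δ hpΔ ⟨hq₂L₁, hq₂Δ⟩
  simpa using this.symm
end
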